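/- arXiv:1205.4442 — 6 statements merged into one kernel-verified Lean document; each statement's English description precedes it below -/
import Mathlib

section
/- The images of K under M_0 and M_1 intersect in exactly one point: M_0(K) ∩ M_1(K) = {(2/5, 2/5, 1/5)}, and this point equals M_0·e_1 = M_1·e_0, where e_0 = (1,0,0) and e_1 = (0,1,0). -/
/-! The coordinate difference `w 0 - w 1` is `v 0 + v 2 / 5 ≥ 0` on `w = M0 v` and `-(u 1 + u 2 / 5) ≤ 0`
on `w = M1 u` (`u, v ∈ K`). A common point of both images therefore has `w 0 = w 1`, which forces
`v = e₁` and `w = M0 e₁`. -/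

noncomputable def M0 : Matrix (Fin 3) (Fin 3) ℝ :=
  (1/5 : ℝ) • !![5, 2, 2; 0, 2, 1; 0, 1, 2]

noncomputable def M1 : Matrix (Fin 3) (Fin 3) ℝ :=
  (1/5 : ℝ) • !![2, 0, 1; 2, 5, 2; 1, 0, 2]

def K : Set (Fin 3 → ℝ) :=
  {v | v 0 + v 1 + v 2 = 1 ∧ ∀ i, 0 ≤ v i}

open Matrix

lemma M0_mulVec (v : Fin 3 → ℝ) :
    M0 *ᵥ v = ![(5 * v 0 + 2 * v 1 + 2 * v 2) / 5, (2 * v 1 + v 2) / 5, (v 1 + 2 * v 2) / 5] := by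
  ext i; fin_cases i <;> simp [M0, mulVec, dotProduct, Fin.sum_univ_three] <;> ring

lemma M1_mulVec (v : Fin 3 → ℝ) :
    M1 *ᵥ v = ![(2 * v 0 + v 2) / 5, (2 * v 0 + 5 * v 1 + 2 * v 2) / 5, (v 0 + 2 * v 2) / 5] := by
  ext i; fin_cases i <;> simp [M1, mulVec, dotProduct, Fin.sum_univ_three] <;> ring

lemma M0_mulVec_apply_zero_sub_apply_one (v : Fin 3 → ℝ) :
    (M0 *ᵥ v) 0 - (M0 *ᵥ v) 1 = v 0 + v 2 / 5 := by
  simp only [M0_mulVec, cons_val_zero, cons_val_one]; ring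

lemma M1_mulVec_apply_one_sub_apply_zero (v : Fin 3 → ℝ) :
    (M1 *ᵥ v) 1 - (M1 *ᵥ v) 0 = v 1 + v 2 / 5 := by
  simp only [M1_mulVec, cons_val_zero, cons_val_one]; ring

lemma M0_mulVec_e1 : M0 *ᵥ ![0, 1, 0] = ![2/5, 2/5, 1/5] := by
  rw [M0_mulVec]; ext i; fin_cases i <;> simp

lemma M1_mulVec_e0 : M1 *ᵥ ![1, 0, 0] = ![2/5, 2/5, 1/5] := by
  rw [M1_mulVec]; ext i; fin_cases i <;> simp

lemma eq_e1_of_mem_K {v : Fin 3 → ℝ} (hv : v ∈ K) (h0 : v 0 = 0) (h2 : v 2 = 0) :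
    v = ![0, 1, 0] := by
  have h1 : v 1 = 1 := by linarith [hv.1]
  ext i; fin_cases i <;> simp [h0, h1, h2]

lemma vec3_mem_K {a b c : ℝ} (hsum : a + b + c = 1) (ha : 0 ≤ a) (hb : 0 ≤ b) (hc : 0 ≤ c) :
    ![a, b, c] ∈ K :=
  ⟨hsum, by simpa [Fin.forall_fin_succ] using ⟨ha, hb, hc⟩⟩

lemma M0_image_inter_M1_image_subset : M0.mulVec '' K ∩ M1.mulVec '' K ⊆ {![2/5, 2/5, 1/5]} := by
  rintro w ⟨⟨v, hv, rfl⟩, u, hu, hw⟩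
  have hv_diff := M0_mulVec_apply_zero_sub_apply_one v
  have hu_diff := M1_mulVec_apply_one_sub_apply_zero u
  rw [hw] at hu_diff
  have hv0 := hv.2 0; have hv2 := hv.2 2; have hu1 := hu.2 1; have hu2 := hu.2 2
  rw [Set.mem_singleton_iff, eq_e1_of_mem_K hv (by linarith) (by linarith), M0_mulVec_e1]

theorem stmt_5 :
    (M0.mulVec '' K) ∩ (M1.mulVec '' K) = {![2/5, 2/5, 1/5]} ∧
    M0.mulVec ![0, 1, 0] = ![2/5, 2/5, 1/5] ∧
    M1.mulVec ![1, 0, 0] = ![2/5, 2/5, 1/5] := by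
  refine ⟨M0_image_inter_M1_image_subset.antisymm ?_, M0_mulVec_e1, M1_mulVec_e0⟩
  rw [Set.singleton_subset_iff]
  exact ⟨⟨_, vec3_mem_K (by norm_num) le_rfl zero_le_one le_rfl, M0_mulVec_e1⟩,
    ⟨_, vec3_mem_K (by norm_num) zero_le_one le_rfl le_rfl, M1_mulVec_e0⟩⟩
end

section
/- The cone K⃗ = {a·v⃗_0 + b·v⃗_1 : a,b ≥ 0, (a,b) ≠ (0,0)}, where v⃗_0 = (-1, 1/2, 1/2) and v⃗_1 = (-1/2, 1, -1/2), is stable under both M_0 and M_1. -/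
noncomputable def v0 : Fin 3 → ℝ := ![-1, 1/2, 1/2]
noncomputable def v1 : Fin 3 → ℝ := ![-1/2, 1, -1/2]

noncomputable def Kvec : Set (Fin 3 → ℝ) :=
  {u | ∃ a b : ℝ, 0 ≤ a ∧ 0 ≤ b ∧ (a, b) ≠ (0, 0) ∧ u = a • v0 + b • v1}

/-! In the basis `v0, v1` of the plane they span, `M0` acts by the upper triangular matrix
`[[3/5, 1/5], [0, 1/5]]` and `M1` by the lower triangular matrix `[[1/5, 0], [1/5, 3/5]]`.
Both have nonnegative entries and a positive diagonal, so they map nonzero nonnegative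
coefficient pairs to nonzero nonnegative coefficient pairs. -/

section ConicPair

variable {R V : Type*} [Semiring R] [PartialOrder R] [IsOrderedRing R] [NoZeroDivisors R]
  [AddCommMonoid V] [Module R V]

variable (R) in
def conicPair (x y : V) : Set V :=
  {u | ∃ a b : R, 0 ≤ a ∧ 0 ≤ b ∧ (a, b) ≠ (0, 0) ∧ u = a • x + b • y}

omit [IsOrderedRing R] [NoZeroDivisors R] in
theorem conicPair_comm (x y : V) : conicPair R x y = conicPair R y x := by
  ext u
  constructor <;>
  · rintro ⟨a, b, ha, hb, hab, rfl⟩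
    exact ⟨b, a, hb, ha, fun h => hab (by simp_all), add_comm _ _⟩

theorem mapsTo_conicPair_of_upperTriangular (f : V →ₗ[R] V) {x y : V} {p q r : R}
    (hp : 0 < p) (hq : 0 ≤ q) (hr : 0 < r) (hx : f x = p • x) (hy : f y = q • x + r • y) :
    Set.MapsTo f (conicPair R x y) (conicPair R x y) := by
  rintro _ ⟨a, b, ha, hb, hab, rfl⟩
  refine ⟨a * p + b * q, b * r, by positivity, by positivity, ?_, ?_⟩
  · intro h
    obtain ⟨hpaqb, hrb⟩ := Prod.mk.inj h
    have hb0 : b = 0 := (mul_eq_zero.mp hrb).resolve_right hr.ne'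
    have ha0 : a = 0 := by simpa [hb0, hp.ne'] using hpaqb
    exact hab (by rw [ha0, hb0])
  · simp only [map_add, map_smul, hx, hy, smul_add, smul_smul, add_smul]
    abel

theorem mapsTo_conicPair_of_lowerTriangular (f : V →ₗ[R] V) {x y : V} {p q r : R}
    (hp : 0 < p) (hq : 0 ≤ q) (hr : 0 < r) (hx : f x = p • x + q • y) (hy : f y = r • y) :
    Set.MapsTo f (conicPair R x y) (conicPair R x y) := by
  rw [conicPair_comm]
  exact mapsTo_conicPair_of_upperTriangular f hr hq hp hy (by rw [hx, add_comm])

end ConicPair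

theorem Kvec_eq_conicPair : Kvec = conicPair ℝ v0 v1 := rfl

theorem M0_mulVec_v0 : M0.mulVec v0 = (3/5 : ℝ) • v0 := by
  ext i; fin_cases i <;> simp [M0, v0, Matrix.mulVec, dotProduct, Fin.sum_univ_three] <;> norm_num

theorem M0_mulVec_v1 : M0.mulVec v1 = (1/5 : ℝ) • v0 + (1/5 : ℝ) • v1 := by
  ext i; fin_cases i <;> simp [M0, v0, v1, Matrix.mulVec, dotProduct, Fin.sum_univ_three] <;>
    norm_num

theorem M1_mulVec_v0 : M1.mulVec v0 = (1/5 : ℝ) • v0 + (1/5 : ℝ) • v1 := by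
  ext i; fin_cases i <;> simp [M1, v0, v1, Matrix.mulVec, dotProduct, Fin.sum_univ_three] <;>
    norm_num

theorem M1_mulVec_v1 : M1.mulVec v1 = (3/5 : ℝ) • v1 := by
  ext i; fin_cases i <;> simp [M1, v1, Matrix.mulVec, dotProduct, Fin.sum_univ_three] <;> norm_num

theorem stmt_6 :
    (∀ u ∈ Kvec, M0.mulVec u ∈ Kvec) ∧ (∀ u ∈ Kvec, M1.mulVec u ∈ Kvec) := by
  rw [Kvec_eq_conicPair]
  exact ⟨mapsTo_conicPair_of_upperTriangular M0.mulVecLin (by norm_num) (by norm_num)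
      (by norm_num) M0_mulVec_v0 M0_mulVec_v1,
    mapsTo_conicPair_of_lowerTriangular M1.mulVecLin (by norm_num) (by norm_num)
      (by norm_num) M1_mulVec_v0 M1_mulVec_v1⟩
end

section
/- The cone K⃗' = {a·w⃗_0 + b·w⃗_1 : a,b ≥ 0}, where w⃗_0 = (0, 1/2, -1/2) and w⃗_1 = (-1/2, 0, 1/2), is stable under both M_0 and M_1. -/
noncomputable def w0 : Fin 3 → ℝ := ![0, 1/2, -1/2]
noncomputable def w1 : Fin 3 → ℝ := ![-1/2, 0, 1/2]

noncomputable def Kvec' : Set (Fin 3 → ℝ) :=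
  {u | ∃ a b : ℝ, 0 ≤ a ∧ 0 ≤ b ∧ u = a • w0 + b • w1}

/-! A linear map sends the cone spanned by two vectors into itself as soon as it sends both
generators into it. In the basis `w0, w1` of their span, `M0` and `M1` act by the nonnegative
matrices `(1/5) [[1, 1], [0, 3]]` and `(1/5) [[3, 0], [1, 1]]`. -/

section PairCone

variable {R M : Type*} [Semiring R] [PartialOrder R] [AddCommMonoid M] [Module R M]

variable (R) in
def pairCone (v w : M) : Set M :=
  {u | ∃ a b : R, 0 ≤ a ∧ 0 ≤ b ∧ u = a • v + b • w}

theorem LinearMap.mapsTo_pairCone [IsOrderedRing R] (f : M →ₗ[R] M) {v w : M}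
    (hv : f v ∈ pairCone R v w) (hw : f w ∈ pairCone R v w) :
    Set.MapsTo f (pairCone R v w) (pairCone R v w) := by
  rintro _ ⟨a, b, ha, hb, rfl⟩
  obtain ⟨c, d, hc, hd, hcd⟩ := hv
  obtain ⟨c', d', hc', hd', hcd'⟩ := hw
  refine ⟨a * c + b * c', a * d + b * d', by positivity, by positivity, ?_⟩
  rw [map_add, map_smul, map_smul, hcd, hcd']
  simp only [smul_add, add_smul, mul_smul]
  abel

end PairCone

theorem Kvec'_eq_pairCone : Kvec' = pairCone ℝ w0 w1 := rfl

theorem M0_mulVec_w0 : M0.mulVec w0 = (1/5 : ℝ) • w0 + (0 : ℝ) • w1 := by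
  ext i; fin_cases i <;> simp [M0, w0, w1, Matrix.mulVec, dotProduct, Fin.sum_univ_three] <;>
    norm_num

theorem M0_mulVec_w1 : M0.mulVec w1 = (1/5 : ℝ) • w0 + (3/5 : ℝ) • w1 := by
  ext i; fin_cases i <;> simp [M0, w0, w1, Matrix.mulVec, dotProduct, Fin.sum_univ_three] <;>
    norm_num

theorem M1_mulVec_w0 : M1.mulVec w0 = (3/5 : ℝ) • w0 + (1/5 : ℝ) • w1 := by
  ext i; fin_cases i <;> simp [M1, w0, w1, Matrix.mulVec, dotProduct, Fin.sum_univ_three] <;>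
    norm_num

theorem M1_mulVec_w1 : M1.mulVec w1 = (0 : ℝ) • w0 + (1/5 : ℝ) • w1 := by
  ext i; fin_cases i <;> simp [M1, w0, w1, Matrix.mulVec, dotProduct, Fin.sum_univ_three] <;>
    norm_num

theorem stmt_7 :
    (∀ u ∈ Kvec', M0.mulVec u ∈ Kvec') ∧ (∀ u ∈ Kvec', M1.mulVec u ∈ Kvec') := by
  rw [Kvec'_eq_pairCone]
  exact ⟨(Matrix.mulVecLin M0).mapsTo_pairCone
      ⟨1/5, 0, by norm_num, le_rfl, M0_mulVec_w0⟩ ⟨1/5, 3/5, by norm_num, by norm_num, M0_mulVec_w1⟩,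
    (Matrix.mulVecLin M1).mapsTo_pairCone
      ⟨3/5, 1/5, by norm_num, by norm_num, M1_mulVec_w0⟩ ⟨0, 1/5, le_rfl, by norm_num, M1_mulVec_w1⟩⟩
end

section
/- For any word w ∈ {0,1}^n with n ≥ 1, the restriction of M_w to the plane {x+y+z=0} (a 2×2 linear map) has two distinct positive real eigenvalues λ_w > μ_w > 0 with λ_w·μ_w = (3/25)^n, and the eigenvector for λ_w lies in the cone K⃗ = {a·v⃗_0 + b·v⃗_1 : a,b ≥ 0, (a,b)≠(0,0)}. -/
noncomputable def Mbit (b : Bool) : Matrix (Fin 3) (Fin 3) ℝ :=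
  if b then M1 else M0

noncomputable def Mword (w : List Bool) : Matrix (Fin 3) (Fin 3) ℝ :=
  (w.map Mbit).prod

/-!
In the basis `v0, v1` of the plane `x + y + z = 0`, `M0` and `M1` act by the nonnegative
matrices `restrBit`, of determinant `3/25`, so the restriction of `Mword w` is the nonnegative
`2 × 2` matrix `restrWord w = !![p, q; r, s]` of determinant `(3/25)^n`. Its discriminant
`(p - s)^2 + 4qr` is positive: either both off-diagonal entries are positive, or the word is
constant and the matrix is triangular with distinct diagonal entries. The larger root `λ` of the
characteristic polynomial is then at least `max p s`, so `(q + λ - s, r + λ - p)` is a nonzero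
eigenvector with nonnegative coordinates.
-/

namespace Matrix

variable (B : Matrix (Fin 2) (Fin 2) ℝ)

theorem fin_two_mulVec_eq_smul_of_charpoly {t : ℝ} (ht : t ^ 2 - B.trace * t + B.det = 0)
    (α β : ℝ) :
    B *ᵥ ![α * B 0 1 + β * (t - B 1 1), α * (t - B 0 0) + β * B 1 0] =
      t • ![α * B 0 1 + β * (t - B 1 1), α * (t - B 0 0) + β * B 1 0] := by
  rw [trace_fin_two, det_fin_two] at ht
  ext i
  fin_cases i
  · simp only [mulVec, dotProduct, Fin.sum_univ_two, Pi.smul_apply, smul_eq_mul, Fin.zero_eta,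
      cons_val_zero, cons_val_one]
    linear_combination (-β) * ht
  · simp only [mulVec, dotProduct, Fin.sum_univ_two, Pi.smul_apply, smul_eq_mul, Fin.mk_one,
      cons_val_zero, cons_val_one]
    linear_combination (-α) * ht

theorem exists_eigenpairs_fin_two_of_nonneg (hB : ∀ i j, 0 ≤ B i j) (hdet : 0 < B.det)
    (hdisc : 0 < B.trace ^ 2 - 4 * B.det) :
    ∃ lam mu : ℝ, mu < lam ∧ 0 < mu ∧ lam * mu = B.det ∧
      (∃ x, 0 ≤ x ∧ x ≠ 0 ∧ B *ᵥ x = lam • x) ∧ ∃ y, y ≠ 0 ∧ B *ᵥ y = mu • y := by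
  set d := √(B.trace ^ 2 - 4 * B.det)
  have hd : d ^ 2 = B.trace ^ 2 - 4 * B.det := Real.sq_sqrt hdisc.le
  have hd0 : 0 < d := Real.sqrt_pos.2 hdisc
  have hdiag : |B 0 0 - B 1 1| ≤ d := by
    refine Real.abs_le_sqrt ?_
    rw [trace_fin_two, det_fin_two]
    nlinarith [hB 0 1, hB 1 0]
  have hroot (t : ℝ) (ht : (2 * t - B.trace) ^ 2 = d ^ 2) : t ^ 2 - B.trace * t + B.det = 0 := by
    linear_combination (1 / 4 : ℝ) * ht + (1 / 4 : ℝ) * hd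
  have hoff : 0 ≤ B 0 1 + B 1 0 := add_nonneg (hB 0 1) (hB 1 0)
  refine ⟨(B.trace + d) / 2, (B.trace - d) / 2, by linarith, ?_, ?_, ?_, ?_⟩
  · have htr : 0 ≤ B.trace := by rw [trace_fin_two]; linarith [hB 0 0, hB 1 1]
    nlinarith
  · linear_combination (-1 / 4 : ℝ) * hd
  -- Both eigenvectors below are nonzero because the sum, resp. difference, of their coordinates
  -- is `B 0 1 + B 1 0 + d > 0`.
  · refine ⟨_, ?_, ?_, fin_two_mulVec_eq_smul_of_charpoly B (hroot _ (by ring)) 1 1⟩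
    · rw [abs_le, trace_fin_two] at *
      intro i
      fin_cases i <;> simp only [Pi.zero_apply, Fin.zero_eta, Fin.mk_one, cons_val_zero,
        cons_val_one] <;> linarith [hB 0 1, hB 1 0]
    · intro h
      have h0 := congrFun h 0
      have h1 := congrFun h 1
      simp only [trace_fin_two, cons_val_zero, cons_val_one, Pi.zero_apply] at h0 h1
      linarith
  · refine ⟨_, ?_, fin_two_mulVec_eq_smul_of_charpoly B (hroot _ (by ring)) 1 (-1)⟩
    intro h
    have h0 := congrFun h 0
    have h1 := congrFun h 1
    simp only [trace_fin_two, cons_val_zero, cons_val_one, Pi.zero_apply] at h0 h1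
    linarith

end Matrix

open Matrix

noncomputable def planeEmbed : Matrix (Fin 3) (Fin 2) ℝ := (of ![v0, v1])ᵀ

noncomputable def restrBit (b : Bool) : Matrix (Fin 2) (Fin 2) ℝ :=
  if b then !![1/5, 0; 1/5, 3/5] else !![3/5, 1/5; 0, 1/5]

noncomputable def restrWord (w : List Bool) : Matrix (Fin 2) (Fin 2) ℝ :=
  (w.map restrBit).prod

lemma planeEmbed_mulVec (c : Fin 2 → ℝ) : planeEmbed *ᵥ c = c 0 • v0 + c 1 • v1 := by
  rw [planeEmbed, mulVec_transpose, vecMul_eq_sum, Fin.sum_univ_two]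
  rfl

lemma planeEmbed_mulVec_mem_Kvec {c : Fin 2 → ℝ} (hc : 0 ≤ c) (hc0 : c ≠ 0) :
    planeEmbed *ᵥ c ∈ Kvec := by
  refine ⟨c 0, c 1, hc 0, hc 1, fun h => hc0 ?_, planeEmbed_mulVec c⟩
  obtain ⟨h0, h1⟩ := Prod.mk.inj h
  ext i; fin_cases i <;> simp [h0, h1]

lemma planeEmbed_mulVec_sum (c : Fin 2 → ℝ) :
    (planeEmbed *ᵥ c) 0 + (planeEmbed *ᵥ c) 1 + (planeEmbed *ᵥ c) 2 = 0 := by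
  simp only [planeEmbed_mulVec, Pi.add_apply, Pi.smul_apply, smul_eq_mul, v0, v1, cons_val]
  ring

lemma planeEmbed_mulVec_ne_zero {c : Fin 2 → ℝ} (hc : c ≠ 0) : planeEmbed *ᵥ c ≠ 0 := by
  intro h
  have h0 := congrFun h 0
  have h1 := congrFun h 1
  simp only [planeEmbed_mulVec, Pi.add_apply, Pi.smul_apply, smul_eq_mul, v0, v1, cons_val,
    Pi.zero_apply] at h0 h1
  exact hc (by ext i; fin_cases i <;> simp <;> linarith)

lemma Mbit_mul_planeEmbed (b : Bool) : Mbit b * planeEmbed = planeEmbed * restrBit b := by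
  ext i j
  cases b <;> fin_cases i <;> fin_cases j <;>
    norm_num [Mbit, M0, M1, restrBit, planeEmbed, v0, v1, mul_apply, Fin.sum_univ_succ]

lemma Mword_mul_planeEmbed (w : List Bool) : Mword w * planeEmbed = planeEmbed * restrWord w := by
  induction w with
  | nil => simp [Mword, restrWord]
  | cons b w ih =>
    simp only [Mword, restrWord, List.map_cons, List.prod_cons] at ih ⊢
    rw [Matrix.mul_assoc, ih, ← Matrix.mul_assoc, Mbit_mul_planeEmbed, Matrix.mul_assoc]

lemma Mword_mulVec_planeEmbed (w : List Bool) (c : Fin 2 → ℝ) :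
    Mword w *ᵥ (planeEmbed *ᵥ c) = planeEmbed *ᵥ (restrWord w *ᵥ c) := by
  rw [mulVec_mulVec, Mword_mul_planeEmbed, mulVec_mulVec]

lemma det_restrWord (w : List Bool) : (restrWord w).det = (3 / 25 : ℝ) ^ w.length := by
  induction w with
  | nil => simp [restrWord]
  | cons b w ih =>
    simp only [restrWord, List.map_cons, List.prod_cons, det_mul, List.length_cons] at ih ⊢
    rw [ih, pow_succ']
    cases b <;> norm_num [restrBit, det_fin_two_of]

-- The order of the diagonal entries is what makes this stable under left multiplication by
-- `restrBit b`.
def IsSeparated (P : Matrix (Fin 2) (Fin 2) ℝ) : Prop :=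
  (∀ i j, 0 ≤ P i j) ∧ (P 0 1 = 0 → P 0 0 < P 1 1) ∧ (P 1 0 = 0 → P 1 1 < P 0 0)

lemma isSeparated_restrBit (b : Bool) : IsSeparated (restrBit b) := by
  refine ⟨fun i j => ?_, ?_, ?_⟩ <;> cases b <;> try fin_cases i <;> fin_cases j
  all_goals norm_num [restrBit]

lemma IsSeparated.restrBit_mul {P : Matrix (Fin 2) (Fin 2) ℝ} (hP : IsSeparated P) (b : Bool) :
    IsSeparated (restrBit b * P) := by
  obtain ⟨hnn, h01, h10⟩ := hP
  have := hnn 0 0; have := hnn 0 1; have := hnn 1 0; have := hnn 1 1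
  refine ⟨fun i j => ?_, fun h => ?_, fun h => ?_⟩ <;> cases b
  all_goals try fin_cases i <;> fin_cases j
  all_goals
    simp only [restrBit, Bool.false_eq_true, ↓reduceIte, mul_apply, Fin.sum_univ_two, of_apply,
      cons_val', cons_val_fin_one, cons_val_zero, cons_val_one, Fin.zero_eta, Fin.mk_one] at *
    first | linarith | linarith [h01 (by linarith)] | linarith [h10 (by linarith)]

lemma isSeparated_restrWord_cons : ∀ (b : Bool) (w : List Bool), IsSeparated (restrWord (b :: w))
  | b, [] => by simpa [restrWord] using isSeparated_restrBit b
  | b, b' :: w => by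
    simpa [restrWord] using (isSeparated_restrWord_cons b' w).restrBit_mul b

lemma IsSeparated.discr_pos {P : Matrix (Fin 2) (Fin 2) ℝ} (hP : IsSeparated P) :
    0 < P.trace ^ 2 - 4 * P.det := by
  obtain ⟨hnn, h01, h10⟩ := hP
  have hdisc : P.trace ^ 2 - 4 * P.det = (P 0 0 - P 1 1) ^ 2 + 4 * (P 0 1 * P 1 0) := by
    rw [trace_fin_two, det_fin_two]; ring
  rw [hdisc]
  rcases (hnn 0 1).eq_or_lt with h | h
  · nlinarith [h01 h.symm, hnn 1 0]
  rcases (hnn 1 0).eq_or_lt with h' | h'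
  · nlinarith [h10 h'.symm]
  · nlinarith [mul_pos h h']

theorem stmt_11 (w : List Bool) (hw : 1 ≤ w.length) :
    ∃ lam mu : ℝ, mu < lam ∧ 0 < mu ∧ lam * mu = (3/25 : ℝ) ^ w.length ∧
      (∃ x ∈ Kvec, (Mword w).mulVec x = lam • x) ∧
      (∃ y : Fin 3 → ℝ, y ≠ 0 ∧ y 0 + y 1 + y 2 = 0 ∧
        (Mword w).mulVec y = mu • y) := by
  obtain ⟨b, w', rfl⟩ := List.exists_cons_of_length_pos hw
  have hsep := isSeparated_restrWord_cons b w'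
  have hdet := det_restrWord (b :: w')
  obtain ⟨lam, mu, hlt, hmu, hprod, ⟨x, hx, hx0, hxe⟩, ⟨y, hy0, hye⟩⟩ :=
    exists_eigenpairs_fin_two_of_nonneg _ hsep.1 (hdet ▸ by positivity) hsep.discr_pos
  refine ⟨lam, mu, hlt, hmu, hdet ▸ hprod, ⟨_, planeEmbed_mulVec_mem_Kvec hx hx0, ?_⟩,
    ⟨_, planeEmbed_mulVec_ne_zero hy0, planeEmbed_mulVec_sum y, ?_⟩⟩
  · rw [Mword_mulVec_planeEmbed, hxe, mulVec_smul]
  · rw [Mword_mulVec_planeEmbed, hye, mulVec_smul]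
end

section
/- Let f: ℝ² → ℝ² be a linear map given in some basis by a matrix with all entries nonnegative, let C be the closed upper-right quadrant, and let C' = {(x,y) ∈ C \ {0} : m ≤ x/y ≤ M} for fixed 0 < m ≤ M < ∞. Then for all x⃗ ∈ C', with μ = min(m, M⁻¹): μ·‖f‖_∞·‖x⃗‖_∞ ≤ ‖f(x⃗)‖_∞ ≤ 2·‖f‖_∞·‖x⃗‖_∞, where ‖f‖_∞ is the maximum of the matrix entries and ‖·‖_∞ the sup norm. -/
/-! A vector `(x, y)` of the cone `m ≤ x / y ≤ M` has both coordinates at least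
`μ · max x y` with `μ = min m M⁻¹`, so each row `(p, q)` of the matrix satisfies
`p x + q y ≥ (p + q) μ ‖(x, y)‖_∞ ≥ max p q · μ ‖(x, y)‖_∞`; maximizing over the rows gives
the lower bound. The upper bound is `p x + q y ≤ 2 · max p q · max x y`. -/

section LinearOrderedRing

variable {R : Type*} [CommRing R] [LinearOrder R] [IsStrictOrderedRing R]

lemma max_mul_le_add_mul {p q t x y : R} (hp : 0 ≤ p) (hq : 0 ≤ q) (ht : 0 ≤ t)
    (htxy : t ≤ min x y) : max p q * t ≤ p * x + q * y :=
  calc max p q * t ≤ (p + q) * t := by gcongr; exact max_le_add_of_nonneg hp hq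
    _ = p * t + q * t := add_mul p q t
    _ ≤ p * x + q * y := by
      gcongr
      exacts [htxy.trans (min_le_left x y), htxy.trans (min_le_right x y)]

lemma add_mul_le_two_mul_max_mul_max {p q x y : R} (hp : 0 ≤ p) (hx : 0 ≤ x) (hy : 0 ≤ y) :
    p * x + q * y ≤ 2 * max p q * max x y := by
  have hpx : p * x ≤ max p q * max x y := by gcongr <;> simp
  have hqy : q * y ≤ max p q * max x y := by gcongr <;> simp
  linarith

end LinearOrderedRing

lemma min_inv_mul_max_le_min_of_div_mem_Icc {K : Type*} [Field K] [LinearOrder K]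
    [IsStrictOrderedRing K] {m M x y : K} (hm : 0 < m) (hmM : m ≤ M) (hx : 0 ≤ x) (hy : 0 < y)
    (h1 : m ≤ x / y) (h2 : x / y ≤ M) : min m M⁻¹ * max x y ≤ min x y := by
  have hM : 0 < M := hm.trans_le hmM
  rcases le_total x y with h | h
  · rw [max_eq_right h, min_eq_left h]
    calc min m M⁻¹ * y ≤ m * y := by gcongr; exact min_le_left m M⁻¹
      _ ≤ x := (le_div_iff₀ hy).mp h1
  · rw [max_eq_left h, min_eq_right h]
    calc min m M⁻¹ * x ≤ M⁻¹ * x := by gcongr; exact min_le_right m M⁻¹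
      _ ≤ y := (inv_mul_le_iff₀ hM).mpr ((div_le_iff₀ hy).mp h2)

theorem stmt_14_general (a b c d : ℝ) (ha : 0 ≤ a) (hb : 0 ≤ b) (hc : 0 ≤ c) (hd : 0 ≤ d)
    (m M : ℝ) (hm : 0 < m) (hmM : m ≤ M)
    (x y : ℝ) (hx : 0 ≤ x) (hy : 0 ≤ y)
    (h1 : m ≤ x / y) (h2 : x / y ≤ M) :
    min m M⁻¹ * max (max a b) (max c d) * max x y ≤
        max (a * x + b * y) (c * x + d * y) ∧
    max (a * x + b * y) (c * x + d * y) ≤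
        2 * max (max a b) (max c d) * max x y := by
  have hy_pos : 0 < y := by
    refine hy.lt_of_ne ?_
    rintro rfl
    rw [div_zero] at h1
    exact h1.not_gt hm
  have hcone := min_inv_mul_max_le_min_of_div_mem_Icc hm hmM hx hy_pos h1 h2
  have ht : 0 ≤ min m M⁻¹ * max x y :=
    mul_nonneg (le_min hm.le (inv_nonneg.mpr (hm.le.trans hmM))) (hx.trans (le_max_left x y))
  constructor
  · rw [mul_comm (min m M⁻¹), mul_assoc, max_mul_of_nonneg _ _ ht]
    exact max_le_max (max_mul_le_add_mul ha hb ht hcone) (max_mul_le_add_mul hc hd ht hcone)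
  · refine max_le ?_ ?_
    · exact (add_mul_le_two_mul_max_mul_max ha hx hy).trans (by gcongr 2 * ?_ * _; simp)
    · exact (add_mul_le_two_mul_max_mul_max hc hx hy).trans (by gcongr 2 * ?_ * _; simp)

theorem stmt_14 (a b c d : ℝ) (ha : 0 ≤ a) (hb : 0 ≤ b) (hc : 0 ≤ c) (hd : 0 ≤ d)
    (hne : ¬(a = 0 ∧ b = 0 ∧ c = 0 ∧ d = 0))
    (m M : ℝ) (hm : 0 < m) (hmM : m ≤ M)
    (x y : ℝ) (hx : 0 ≤ x) (hy : 0 ≤ y) (hxy : (x, y) ≠ (0, 0))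
    (h1 : m ≤ x / y) (h2 : x / y ≤ M) :
    min m M⁻¹ * max (max a b) (max c d) * max x y ≤
        max (a * x + b * y) (c * x + d * y) ∧
    max (a * x + b * y) (c * x + d * y) ≤
        2 * max (max a b) (max c d) * max x y :=
  stmt_14_general a b c d ha hb hc hd m M hm hmM x y hx hy h1 h2
end

section
/- Let u: [0,1] → ℝ³ be the unique continuous function with u(0) = (1,0,0), u(1) = (0,1,0), u(t/2) = M_0·u(t), u((t+1)/2) = M_1·u(t). Then u(1−s) = P·u(s) for all s ∈ [0,1], where P is the matrix swapping the first two coordinates. -/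
def P : Matrix (Fin 3) (Fin 3) ℝ := !![0, 1, 0; 1, 0, 0; 0, 0, 1]

/-- `u` is a continuous function on `[0,1]` satisfying the boundary conditions
and the self-similarity relations. -/
def IsHarmonicSide (u : ℝ → (Fin 3 → ℝ)) : Prop :=
  ContinuousOn u (Set.Icc 0 1) ∧
  u 0 = ![1, 0, 0] ∧ u 1 = ![0, 1, 0] ∧
  (∀ t ∈ Set.Icc (0:ℝ) 1, u (t / 2) = M0.mulVec (u t)) ∧
  (∀ t ∈ Set.Icc (0:ℝ) 1, u ((t + 1) / 2) = M1.mulVec (u t))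

/-!
Reflecting a solution, `s ↦ P u(1 - s)`, gives again a solution: the boundary values are swapped
by `P`, and the two halves of `[0,1]` are exchanged, which is compatible with the relations
because `P` conjugates `M0` into `M1`. A solution is unique, since two solutions agree at every
dyadic point by induction on the denominator, and the dyadic points are dense in `[0,1]`.
-/

open Set Filter Topology Matrix

section SelfSimilar

variable {X : Type*} {F₀ F₁ : X → X} {u v : ℝ → X}

def IsSelfSimilar (F₀ F₁ : X → X) (u : ℝ → X) : Prop :=
  (∀ t ∈ Icc (0:ℝ) 1, u (t / 2) = F₀ (u t)) ∧ (∀ t ∈ Icc (0:ℝ) 1, u ((t + 1) / 2) = F₁ (u t))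

lemma IsSelfSimilar.eq_at_dyadic (hu : IsSelfSimilar F₀ F₁ u) (hv : IsSelfSimilar F₀ F₁ v)
    (h0 : u 0 = v 0) (h1 : u 1 = v 1) (n m : ℕ) (hm : m ≤ 2 ^ n) :
    u (m / 2 ^ n) = v (m / 2 ^ n) := by
  induction n generalizing m with
  | zero =>
    interval_cases m
    · simpa using h0
    · simpa using h1
  | succ n ih =>
    have hmem (k : ℕ) (hk : k ≤ 2 ^ n) : (k : ℝ) / 2 ^ n ∈ Icc (0:ℝ) 1 :=
      ⟨by positivity, div_le_one_of_le₀ (by exact_mod_cast hk) (by positivity)⟩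
    rcases le_or_gt m (2 ^ n) with hle | hgt
    · have hm' : (m : ℝ) / 2 ^ (n + 1) = (m / 2 ^ n) / 2 := by ring
      rw [hm', hu.1 _ (hmem m hle), hv.1 _ (hmem m hle), ih m hle]
    · have hk : m - 2 ^ n ≤ 2 ^ n := by rw [pow_succ] at hm; omega
      have hm' : (m : ℝ) / 2 ^ (n + 1) = (((m - 2 ^ n : ℕ) : ℝ) / 2 ^ n + 1) / 2 := by
        rw [Nat.cast_sub hgt.le, Nat.cast_pow, Nat.cast_ofNat]; field_simp; ring
      rw [hm', hu.2 _ (hmem _ hk), hv.2 _ (hmem _ hk), ih _ hk]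

lemma IsSelfSimilar.eqOn_Icc [TopologicalSpace X] [T2Space X]
    (hu : IsSelfSimilar F₀ F₁ u) (hv : IsSelfSimilar F₀ F₁ v)
    (huc : ContinuousOn u (Icc 0 1)) (hvc : ContinuousOn v (Icc 0 1))
    (h0 : u 0 = v 0) (h1 : u 1 = v 1) : EqOn u v (Icc 0 1) := by
  intro s hs
  set d : ℕ → ℝ := fun n ↦ (⌊s * 2 ^ n⌋₊ : ℝ) / 2 ^ n
  have hd_le (n : ℕ) : ⌊s * 2 ^ n⌋₊ ≤ 2 ^ n :=
    Nat.floor_le_of_le (by push_cast; exact mul_le_of_le_one_left (by positivity) hs.2)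
  have hd_mem : ∀ᶠ n in atTop, d n ∈ Icc (0:ℝ) 1 := Eventually.of_forall fun n ↦
    ⟨by simp only [d]; positivity, div_le_one_of_le₀ (by exact_mod_cast hd_le n) (by positivity)⟩
  have hd : Tendsto d atTop (𝓝[Icc 0 1] s) := tendsto_nhdsWithin_iff.2
    ⟨(tendsto_nat_floor_mul_div_atTop hs.1).comp
      (tendsto_pow_atTop_atTop_of_one_lt one_lt_two), hd_mem⟩
  have hud : u ∘ d = v ∘ d := funext fun n ↦ hu.eq_at_dyadic hv h0 h1 n _ (hd_le n)
  exact tendsto_nhds_unique ((huc s hs).tendsto.comp hd) (hud ▸ (hvc s hs).tendsto.comp hd)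

end SelfSimilar

lemma M0_mul_P : M0 * P = P * M1 := by
  ext i j
  fin_cases i <;> fin_cases j <;> simp [M0, M1, P, Matrix.mul_apply, Fin.sum_univ_three]

lemma M1_mul_P : M1 * P = P * M0 := by
  ext i j
  fin_cases i <;> fin_cases j <;> simp [M0, M1, P, Matrix.mul_apply, Fin.sum_univ_three]

lemma isHarmonicSide_iff {u : ℝ → Fin 3 → ℝ} :
    IsHarmonicSide u ↔ ContinuousOn u (Icc 0 1) ∧ u 0 = ![1, 0, 0] ∧ u 1 = ![0, 1, 0] ∧
      IsSelfSimilar (M0 *ᵥ ·) (M1 *ᵥ ·) u := Iff.rfl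

lemma IsHarmonicSide.reflect {u : ℝ → Fin 3 → ℝ} (hu : IsHarmonicSide u) :
    IsHarmonicSide fun s ↦ P *ᵥ u (1 - s) := by
  obtain ⟨hc, h0, h1, hM0, hM1⟩ := hu
  refine ⟨?_, ?_, ?_, fun t ht ↦ ?_, fun t ht ↦ ?_⟩
  · exact (Continuous.matrix_mulVec continuous_const continuous_id).comp_continuousOn
      (hc.comp (by fun_prop) fun _ ↦ Icc.mem_iff_one_sub_mem.1)
  · ext i; fin_cases i <;> simp [h1, P, mulVec, dotProduct, Fin.sum_univ_three]
  · ext i; fin_cases i <;> simp [h0, P, mulVec, dotProduct, Fin.sum_univ_three]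
  · dsimp only
    rw [show 1 - t / 2 = ((1 - t) + 1) / 2 by ring, hM1 _ (Icc.mem_iff_one_sub_mem.1 ht),
      mulVec_mulVec, ← M0_mul_P, ← mulVec_mulVec]
  · dsimp only
    rw [show 1 - (t + 1) / 2 = (1 - t) / 2 by ring, hM0 _ (Icc.mem_iff_one_sub_mem.1 ht),
      mulVec_mulVec, ← M1_mul_P, ← mulVec_mulVec]

lemma IsHarmonicSide.eqOn {u v : ℝ → Fin 3 → ℝ} (hu : IsHarmonicSide u) (hv : IsHarmonicSide v) :
    EqOn u v (Icc 0 1) := by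
  obtain ⟨huc, hu0, hu1, hus⟩ := isHarmonicSide_iff.1 hu
  obtain ⟨hvc, hv0, hv1, hvs⟩ := isHarmonicSide_iff.1 hv
  exact hus.eqOn_Icc hvs huc hvc (hu0.trans hv0.symm) (hu1.trans hv1.symm)

theorem stmt_18 (u : ℝ → (Fin 3 → ℝ)) (hu : IsHarmonicSide u) :
    ∀ s ∈ Set.Icc (0:ℝ) 1, u (1 - s) = P.mulVec (u s) := by
  intro s hs
  have h := hu.reflect.eqOn hu (Icc.mem_iff_one_sub_mem.1 hs)
  simpa only [sub_sub_cancel] using h.symm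
end
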